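/- arXiv:2006.05023 — 2 statements merged into one kernel-verified Lean document; each statement's English description precedes it below -/
import Mathlib

section
/- Suppose the cumulative probability of the $t$ most likely passwords follows Zipf's law $\lambda_t = y t^r$ with $0 < r \le 1$, $y > 0$, and let $0 < a \le 1$. Let $Z = \lceil (1/y)^{1/r} \rceil + 1$ and $T(y,r,a) = \max_{2 \le t \le Z} \frac{1 - y(t-1)^r}{y^a (ra) t^{ra-1}}$. If $v/k \ge T(y,r,a)$, then for every integer $t \ge 2$ with $y(t-1)^r \le 1$, the marginal revenue $MR(t) = v(y^a t^{ra} - y^a (t-1)^{ra})$ is at least the marginal cost $MC(t) = k(1 - y(t-1)^r)$; hence a rational attacker never stops guessing. -/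
/-!
Write `p = r a`. Since `x ↦ x ^ p` is concave for `0 < p ≤ 1`, its tangent at `t` lies above it,
so `t ^ p - (t - 1) ^ p ≥ p t ^ (p - 1)`: the marginal revenue is at least `v y^a p t^(p-1)`.
The hypothesis `y (t - 1)^r ≤ 1` forces `t ≤ Z`, so `t` is one of the indices over which the
threshold `T(y, r, a)` is a maximum, and `v / k ≥ T` turns that lower bound into `MR(t) ≥ MC(t)`.
-/

open Real Finset

theorem rpow_le_rpow_add_mul_rpow_sub_one_mul_sub {x y p : ℝ} (hx : 0 ≤ x) (hy : 0 < y)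
    (hp₀ : 0 ≤ p) (hp₁ : p ≤ 1) : x ^ p ≤ y ^ p + p * y ^ (p - 1) * (x - y) := by
  have hs : -1 ≤ x / y - 1 := by linarith [div_nonneg hx hy.le]
  have bernoulli := rpow_one_add_le_one_add_mul_self hs hp₀ hp₁
  rw [add_sub_cancel, div_rpow hx hy.le, div_le_iff₀ (rpow_pos_of_pos hy p)] at bernoulli
  calc x ^ p ≤ (1 + p * (x / y - 1)) * y ^ p := bernoulli
    _ = y ^ p + p * y ^ (p - 1) * (x - y) := by
      rw [rpow_sub_one hy.ne']
      field_simp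

theorem le_rpow_inv_of_mul_rpow_le_one {x y r : ℝ} (hx : 0 ≤ x) (hy : 0 < y) (hr : 0 < r)
    (h : y * x ^ r ≤ 1) : x ≤ (1 / y) ^ (1 / r) := by
  rw [one_div r, le_rpow_inv_iff_of_pos hx (by positivity) hr, le_div_iff₀ hy, mul_comm]
  exact h

/-- if `v/k` is at least the threshold `T(y,r,a)` (the maximum of
`(1 - y(t-1)^r)/(y^a (ra) t^{ra-1})` over `2 ≤ t ≤ Z` with `Z = ⌈(1/y)^(1/r)⌉ + 1`),
then for every integer `t ≥ 2` with `y(t-1)^r ≤ 1`, marginal revenue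
`MR(t) = v(y^a t^{ra} - y^a (t-1)^{ra})` is at least marginal cost
`MC(t) = k(1 - y(t-1)^r)`: the rational attacker never stops guessing. -/
theorem stmt_2 (v k r a y : ℝ) (hv : 0 < v) (hk : 0 < k)
    (hr : 0 < r) (hr1 : r ≤ 1) (ha : 0 < a) (ha1 : a ≤ 1) (hy : 0 < y)
    (Z : ℕ) (hZ : (Z : ℝ) = ⌈(1 / y) ^ (1 / r)⌉ + 1)
    (hT : ∀ t ∈ Finset.Icc 2 Z,
      v / k ≥ (1 - y * ((t : ℝ) - 1) ^ r) / (y ^ a * (r * a) * (t : ℝ) ^ (r * a - 1))) :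
    ∀ t : ℕ, 2 ≤ t → y * ((t : ℝ) - 1) ^ r ≤ 1 →
      v * (y ^ a * (t : ℝ) ^ (r * a) - y ^ a * ((t : ℝ) - 1) ^ (r * a))
        ≥ k * (1 - y * ((t : ℝ) - 1) ^ r) := by
  intro t ht hle
  have ht2 : (2 : ℝ) ≤ t := by exact_mod_cast ht
  have htZ : t ≤ Z := by
    have hroot := le_rpow_inv_of_mul_rpow_le_one (by linarith) hy hr hle
    have htZ' : (t : ℝ) ≤ Z := by rw [hZ]; linarith [Int.le_ceil ((1 / y) ^ (1 / r))]
    exact_mod_cast htZ'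
  have hthreshold := hT t (Finset.mem_Icc.mpr ⟨ht, htZ⟩)
  have hD : 0 < y ^ a * (r * a) * (t : ℝ) ^ (r * a - 1) := by positivity
  rw [ge_iff_le, div_le_div_iff₀ hD hk] at hthreshold
  have htangent := rpow_le_rpow_add_mul_rpow_sub_one_mul_sub (x := (t : ℝ) - 1) (y := t)
    (by linarith) (by linarith) (mul_pos hr ha).le (mul_le_one₀ hr1 ha.le ha1)
  have hMR : y ^ a * (r * a) * (t : ℝ) ^ (r * a - 1)
      ≤ y ^ a * (t : ℝ) ^ (r * a) - y ^ a * ((t : ℝ) - 1) ^ (r * a) := by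
    rw [← mul_sub, mul_assoc]
    exact mul_le_mul_of_nonneg_left (by linarith) (rpow_nonneg hy.le a)
  calc k * (1 - y * ((t : ℝ) - 1) ^ r) ≤ v * (y ^ a * (r * a) * (t : ℝ) ^ (r * a - 1)) := by
        linarith
    _ ≤ _ := mul_le_mul_of_nonneg_left hMR hv.le
end

section
/- In a competitive cracking setting where an attacker's reward is scaled by the probability $p_{\text{first}} \in [0,1]$ of being first, the fraction of passwords cracked by some attacker satisfies $\mathbf{CompCrack}(v, a) \ge \min_{0 \le p \le 1} \max\{\mathbf{Cracked}(pv, a),\ 1 - p\}$, assuming: (i) an attacker facing first-mover probability $p$ cracks at least the fraction $\mathbf{Cracked}(pv, a)$ (since his effective value is at least $pv$), and (ii) with probability $1-p$ another attacker has already cracked the account. -/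
theorem stmt_15_general (v : ℝ) (Cracked : ℝ → ℝ) (CompCrack : ℝ)
    (hnonneg : ∀ x, 0 ≤ Cracked x)
    (p : ℝ) (hp0 : 0 ≤ p) (hp1 : p ≤ 1)
    (hfirst : CompCrack ≥ Cracked (p * v))
    (hother : CompCrack ≥ 1 - p) :
    CompCrack ≥ ⨅ q : Set.Icc (0 : ℝ) 1, max (Cracked ((q : ℝ) * v)) (1 - (q : ℝ)) := by
  -- Without a lower bound, `⨅` over ℝ would be the junk value 0.
  have hbdd : BddBelow (Set.range fun q : Set.Icc (0 : ℝ) 1 =>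
      max (Cracked ((q : ℝ) * v)) (1 - (q : ℝ))) := by
    refine ⟨0, ?_⟩
    rintro _ ⟨q, rfl⟩
    exact (hnonneg _).trans (le_max_left _ _)
  exact ciInf_le_of_le hbdd ⟨p, hp0, hp1⟩ (max_le hfirst hother)

/-- competitive cracking bound.  If the focal attacker is first with
probability `p ∈ [0,1]`, cracks at least the non-competitive fraction `Cracked(p·v)`
(since his effective value is at least `p·v`), and with probability `1-p` another attacker
already cracked the account, then
`CompCrack(v,a) ≥ min_{0 ≤ q ≤ 1} max{Cracked(q·v), 1-q}`. -/
theorem stmt_15 (v : ℝ) (hv : 0 < v) (Cracked : ℝ → ℝ) (CompCrack : ℝ)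
    (hmono : Monotone Cracked) (hnonneg : ∀ x, 0 ≤ Cracked x)
    (p : ℝ) (hp0 : 0 ≤ p) (hp1 : p ≤ 1)
    (hfirst : CompCrack ≥ Cracked (p * v))
    (hother : CompCrack ≥ 1 - p) :
    CompCrack ≥ ⨅ q : Set.Icc (0 : ℝ) 1, max (Cracked ((q : ℝ) * v)) (1 - (q : ℝ)) :=
  stmt_15_general v Cracked CompCrack hnonneg p hp0 hp1 hfirst hother
end
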